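/- Environment domain invariant of the Space KAM: if s is a state reachable from an initial state (t₀, ε, ε) with t₀ closed, then for every closure (t, e) occurring in s, the domain of the environment e equals the set of free variables of t. -/

import Mathlib

/-! ## Lambda terms, substitution, weak head reduction -/

inductive Tm : Type
  | var : ℕ → Tm
  | lam : ℕ → Tm → Tm
  | app : Tm → Tm → Tm
deriving DecidableEq

def subst (x : ℕ) (u : Tm) : Tm → Tm
  | .var y => if y = x then u else .var y
  | .lam y t => if y = x then .lam y t else .lam y (subst x u t)
  | .app t s => .app (subst x u t) (subst x u s)

def fv : Tm → Finset ℕ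
  | .var x => {x}
  | .lam x t => fv t \ {x}
  | .app t u => fv t ∪ fv u

/-- Weak head reduction: `(λx.t) u r₁ … r_h →wh t[x:=u] r₁ … r_h`. -/
inductive Wh : Tm → Tm → Prop
  | beta (x : ℕ) (t u : Tm) : Wh (.app (.lam x t) u) (subst x u t)
  | appL {t t' : Tm} (u : Tm) : Wh t t' → Wh (.app t u) (.app t' u)

/-! ## Space KAM -/

mutual
inductive Clo : Type
  | mk : Tm → Env → Clo
inductive Env : Type
  | nil : Env
  | cons : ℕ → Clo → Env → Env
end

def Env.lookup : Env → ℕ → Option Clo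
  | .nil, _ => none
  | .cons y c e, x => if x = y then some c else e.lookup x

def Env.dom : Env → Finset ℕ
  | .nil => ∅
  | .cons y _ e => insert y e.dom

/-- `e.restrict V` is the restriction `e|_V` of `e` to the variables in `V`. -/
def Env.restrict : Env → Finset ℕ → Env
  | .nil, _ => .nil
  | .cons y c e, V => if y ∈ V then .cons y c (e.restrict V) else e.restrict V

structure State : Type where
  tm : Tm
  env : Env
  stk : List Clo

/-- Space KAM transitions (with unchaining and eager garbage collection). -/
inductive SpKAM : State → State → Prop
  | sea_v {t : Tm} {x : ℕ} {e : Env} {S : List Clo} {c : Clo} :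
      e.lookup x = some c →
      SpKAM ⟨.app t (.var x), e, S⟩ ⟨t, e.restrict (fv t), c :: S⟩
  | sea_nv {t u : Tm} {e : Env} {S : List Clo} :
      (∀ y, u ≠ .var y) →
      SpKAM ⟨.app t u, e, S⟩ ⟨t, e.restrict (fv t), Clo.mk u (e.restrict (fv u)) :: S⟩
  | beta_w {x : ℕ} {t : Tm} {e : Env} {c : Clo} {S : List Clo} :
      x ∉ fv t →
      SpKAM ⟨.lam x t, e, c :: S⟩ ⟨t, e, S⟩
  | beta_nw {x : ℕ} {t : Tm} {e : Env} {c : Clo} {S : List Clo} :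
      x ∈ fv t →
      SpKAM ⟨.lam x t, e, c :: S⟩ ⟨t, .cons x c e, S⟩
  | sub {x : ℕ} {e e' : Env} {u : Tm} {S : List Clo} :
      e.lookup x = some (Clo.mk u e') →
      SpKAM ⟨.var x, e, S⟩ ⟨u, e', S⟩

/-- A state is reachable if it is the target of a run from an initial state
`(t₀, ε, ε)` with `t₀` closed. -/
def Reachable (s : State) : Prop :=
  ∃ t₀ : Tm, fv t₀ = ∅ ∧ Relation.ReflTransGen SpKAM ⟨t₀, .nil, []⟩ s

mutual
def Clo.closures : Clo → List Clo
  | .mk t e => .mk t e :: e.closures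
def Env.closures : Env → List Clo
  | .nil => []
  | .cons _ c e => c.closures ++ e.closures
end

/-- All closures occurring in a state (including the active closure). -/
def State.closures (s : State) : List Clo :=
  (Clo.mk s.tm s.env).closures ++ (s.stk.map Clo.closures).flatten

mutual
def Clo.size : Clo → ℕ
  | .mk _ e => 1 + e.size
def Env.size : Env → ℕ
  | .nil => 0
  | .cons _ c e => c.size + e.size
end

def State.size (s : State) : ℕ := s.env.size + (s.stk.map Clo.size).sum

def Clo.env : Clo → Env
  | .mk _ e => e

/-- Final states: no transition applies. -/
def Final (s : State) : Prop := ∀ s', ¬ SpKAM s s'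

/-- Runs together with their abstract space consumption (the maximum of the
sizes of the traversed states). -/
inductive RunSp : State → State → ℕ → Prop
  | refl (s : State) : RunSp s s s.size
  | step {s s' s'' : State} {m : ℕ} :
      SpKAM s s' → RunSp s' s'' m → RunSp s s'' (max s.size m)

/-! ## Closure types -/

mutual
inductive LTy : Type
  | star : LTy
  | arr : MTy → LTy → LTy
inductive MTy : Type
  | mk : List LTy → ℕ → MTy
end

def MTy.idx : MTy → ℕ | .mk _ k => k

def MTy.union : MTy → MTy → MTy
  | .mk l k, .mk l' _ => .mk (l ++ l') k

def LTy.size : LTy → ℕ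
  | .star => 0
  | .arr M A => M.idx + A.size

/-- Type contexts: finitely supported assignments of closure types to
variables (outside the domain the default `[]^1` is assigned). -/
structure Ctx : Type where
  dom : Finset ℕ
  ty : ℕ → MTy
  off_dom : ∀ x ∉ dom, ty x = MTy.mk [] 1

def Ctx.size (Γ : Ctx) : ℕ := Γ.dom.sum fun x => (Γ.ty x).idx

def Ctx.Dry (Γ : Ctx) : Prop :=
  ∀ x ∈ Γ.dom, ∃ k, 0 < k ∧ Γ.ty x = MTy.mk [] k

def Ctx.Summable (Γ Δ : Ctx) : Prop :=
  ∀ x ∈ Γ.dom ∩ Δ.dom, (Γ.ty x).idx = (Δ.ty x).idx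

def Ctx.empty : Ctx := ⟨∅, fun _ => MTy.mk [] 1, fun _ _ => rfl⟩

def Ctx.single (x : ℕ) (M : MTy) : Ctx :=
  ⟨{x}, fun y => if y = x then M else MTy.mk [] 1, by
    intro y hy
    simp only [Finset.mem_singleton] at hy
    simp [hy]⟩

def Ctx.extend (Γ : Ctx) (x : ℕ) (M : MTy) : Ctx :=
  ⟨insert x Γ.dom, Function.update Γ.ty x M, by
    intro y hy
    simp only [Finset.mem_insert, not_or] at hy
    rw [Function.update_of_ne hy.1]
    exact Γ.off_dom y hy.2⟩

def Ctx.union (Γ Δ : Ctx) : Ctx :=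
  ⟨Γ.dom ∪ Δ.dom,
   fun x =>
     if x ∈ Γ.dom then
       (if x ∈ Δ.dom then (Γ.ty x).union (Δ.ty x) else Γ.ty x)
     else Δ.ty x,
   by
    intro x hx
    simp only [Finset.mem_union, not_or] at hx
    simp [hx.1, hx.2, Δ.off_dom x hx.2]⟩

/-! ## The weighted closure type system (space weights), with derivation
sizes (counting all rules except T-many, T-none, T-cl, T-env). -/

mutual
/-- `TJ Γ t A w n`: the judgment `Γ ⊢ t : A` is derivable with weight `w`
by a derivation of size `n`. -/
inductive TJ : Ctx → Tm → LTy → ℕ → ℕ → Prop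
  | var {x : ℕ} {A : LTy} {k : ℕ} : 0 < k →
      TJ (Ctx.single x (.mk [A] k)) (.var x) A (k + A.size) 1
  | lamStar {Γ : Ctx} {x : ℕ} {t : Tm} :
      Γ.Dry → Γ.dom = fv (.lam x t) →
      TJ Γ (.lam x t) .star Γ.size 1
  | lam1 {Γ : Ctx} {x : ℕ} {M : MTy} {t : Tm} {A : LTy} {w n : ℕ} :
      x ∉ Γ.dom →
      TJ (Γ.extend x M) t A w n →
      TJ Γ (.lam x t) (.arr M A) w (n + 1)
  | lam2 {Γ : Ctx} {x : ℕ} {t : Tm} {A : LTy} {k w n : ℕ} :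
      x ∉ Γ.dom → 0 < k →
      TJ Γ t A w n →
      TJ Γ (.lam x t) (.arr (.mk [] k) A) (max w (Γ.size + A.size + k)) (n + 1)
  | app1 {Γ Δ : Ctx} {t u : Tm} {M : MTy} {A : LTy} {w v n m : ℕ} :
      Γ.Summable Δ →
      TJ Γ t (.arr M A) w n → MJ Δ u M v m →
      TJ (Γ.union Δ) (.app t u) A (max w v) (n + m + 1)
  | app2 {Γ : Ctx} {x : ℕ} {t : Tm} {M : MTy} {A : LTy} {w n : ℕ} :
      Γ.Summable (Ctx.single x M) →
      TJ Γ t (.arr M A) w n →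
      TJ (Γ.union (Ctx.single x M)) (.app t (.var x)) A w (n + 1)

/-- `MJ Γ t 𝒜 w n`: multiset judgment (rules T-none / T-many). -/
inductive MJ : Ctx → Tm → MTy → ℕ → ℕ → Prop
  | none {Γ : Ctx} {t : Tm} :
      Γ.Dry → Γ.dom = fv t →
      MJ Γ t (.mk [] (1 + Γ.size)) 0 0
  | one {Γ : Ctx} {t : Tm} {A : LTy} {w n : ℕ} :
      TJ Γ t A w n →
      MJ Γ t (.mk [A] (1 + Γ.size)) w n
  | cons {Γ Δ : Ctx} {t : Tm} {A : LTy} {l : List LTy} {w v n m : ℕ} :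
      Γ.Summable Δ →
      TJ Γ t A w n → MJ Δ t (.mk l (1 + Δ.size)) v m →
      MJ (Γ.union Δ) t (.mk (A :: l) (1 + (Γ.union Δ).size)) (max w v) (n + m)
end

/-! ## Typing of machine components -/

mutual
/-- `EJ e Γ w n`: rule T-env, typing an environment with a type context. -/
inductive EJ : Env → Ctx → ℕ → ℕ → Prop
  | nil : EJ .nil Ctx.empty 0 0
  | cons {e : Env} {Γ : Ctx} {x : ℕ} {c : Clo} {M : MTy} {w v n m : ℕ} :
      x ∉ Γ.dom →
      CJ c M w n → EJ e Γ v m →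
      EJ (.cons x c e) (Γ.extend x M) (max w v) (n + m)

/-- `CJ c 𝒜 w n`: rule T-cl, typing a closure with a closure type. -/
inductive CJ : Clo → MTy → ℕ → ℕ → Prop
  | mk {t : Tm} {e : Env} {Γ : Ctx} {M : MTy} {w v n m : ℕ} :
      EJ e Γ w n → MJ Γ t M v m →
      CJ (.mk t e) M (max w v) (n + m)
end

/-- Typing of stacks against the arrow structure of a linear type ending in `⋆`. -/
inductive SJ : List Clo → LTy → ℕ → ℕ → Prop
  | nil : SJ [] .star 0 0
  | cons {c : Clo} {M : MTy} {S : List Clo} {A : LTy} {w v n m : ℕ} :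
      CJ c M w n → SJ S A v m →
      SJ (c :: S) (.arr M A) (max w v) (n + m)

/-- `StJ s w n`: rule T-st, typing a state with `⋆`. -/
inductive StJ : State → ℕ → ℕ → Prop
  | mk {t : Tm} {e : Env} {S : List Clo} {Γ : Ctx} {A : LTy} {w u v n m p : ℕ} :
      TJ Γ t A w n → EJ e Γ u m → SJ S A v p →
      StJ ⟨t, e, S⟩ (max w (max u v)) (n + m + p)

lemma restrict_dom : ∀ (e : Env) (V : Finset ℕ), (e.restrict V).dom = e.dom ∩ V
  | .nil, V => by simp [Env.restrict, Env.dom]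
  | .cons y c e, V => by
    by_cases hy : y ∈ V
    · simp [Env.restrict, hy, Env.dom, restrict_dom e V, Finset.insert_inter_of_mem hy]
    · simp [Env.restrict, hy, Env.dom, restrict_dom e V, Finset.insert_inter_of_notMem hy]

lemma restrict_closures_sub {c : Clo} : ∀ (e : Env) (V : Finset ℕ),
    c ∈ (e.restrict V).closures → c ∈ e.closures
  | .nil, V, h => by simpa [Env.restrict] using h
  | .cons y d e, V, h => by
    by_cases hy : y ∈ V
    · simp only [Env.restrict, hy, if_true, Env.closures, List.mem_append] at h ⊢
      exact h.imp id (restrict_closures_sub e V)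
    · simp only [Env.restrict, hy, if_false] at h
      simp only [Env.closures, List.mem_append]
      exact Or.inr (restrict_closures_sub e V h)

lemma lookup_closures_sub {x : ℕ} {c d : Clo} :
    ∀ {e : Env}, e.lookup x = some c → d ∈ c.closures → d ∈ e.closures
  | .nil, h, _ => by simp [Env.lookup] at h
  | .cons y c' e, h, hd => by
    simp only [Env.lookup] at h
    by_cases hx : x = y
    · simp only [hx, if_true] at h
      cases h
      simp only [Env.closures, List.mem_append]
      exact Or.inl hd
    · simp only [hx, if_false] at h
      simp only [Env.closures, List.mem_append]
      exact Or.inr (lookup_closures_sub h hd)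

def StInv (s : State) : Prop :=
  ∀ c ∈ s.closures, ∀ t e, c = Clo.mk t e → e.dom = fv t

lemma mem_state_closures {c : Clo} {t : Tm} {e : Env} {S : List Clo} :
    c ∈ State.closures ⟨t, e, S⟩ ↔
      (c = Clo.mk t e ∨ c ∈ e.closures) ∨ ∃ d ∈ S, c ∈ d.closures := by
  simp only [State.closures, Clo.closures, List.mem_append, List.mem_cons,
    List.mem_flatten, List.mem_map]
  constructor
  · rintro ((h | h) | ⟨l, ⟨d, hd, rfl⟩, hc⟩)
    · exact Or.inl (Or.inl h)
    · exact Or.inl (Or.inr h)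
    · exact Or.inr ⟨d, hd, hc⟩
  · rintro ((h | h) | ⟨d, hd, hc⟩)
    · exact Or.inl (Or.inl h)
    · exact Or.inl (Or.inr h)
    · exact Or.inr ⟨d.closures, ⟨d, hd, rfl⟩, hc⟩

lemma inv_step {s s' : State} (hs : StInv s) (h : SpKAM s s') : StInv s' := by
  cases h with
  | @sea_v t x e S c hl =>
    intro c' hc' t' e' hce
    rw [mem_state_closures] at hc'
    rcases hc' with (rfl | hc') | ⟨d, hd, hc'⟩
    · cases hce
      rw [restrict_dom]
      have := hs (Clo.mk (.app t (.var x)) e) (by rw [mem_state_closures]; left; left; rfl) _ _ rfl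
      rw [this]
      simp [fv, Finset.union_inter_cancel_left]
    · exact hs c' (by rw [mem_state_closures]; exact Or.inl (Or.inr (restrict_closures_sub e _ hc'))) _ _ hce
    · rcases List.mem_cons.mp hd with rfl | hd
      · exact hs c' (by rw [mem_state_closures]; exact Or.inl (Or.inr (lookup_closures_sub hl hc'))) _ _ hce
      · exact hs c' (by rw [mem_state_closures]; exact Or.inr ⟨d, hd, hc'⟩) _ _ hce
  | @sea_nv t u e S hnv =>
    intro c' hc' t' e' hce
    have hdom := hs (Clo.mk (.app t u) e) (by rw [mem_state_closures]; left; left; rfl) _ _ rfl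
    rw [mem_state_closures] at hc'
    rcases hc' with (rfl | hc') | ⟨d, hd, hc'⟩
    · cases hce
      rw [restrict_dom, hdom]
      simp [fv, Finset.union_inter_cancel_left]
    · exact hs c' (by rw [mem_state_closures]; exact Or.inl (Or.inr (restrict_closures_sub e _ hc'))) _ _ hce
    · rcases List.mem_cons.mp hd with rfl | hd
      · rcases List.mem_cons.mp hc' with rfl | hc'
        · cases hce
          rw [restrict_dom, hdom]
          simp [fv, Finset.union_inter_cancel_right]
        · exact hs c' (by rw [mem_state_closures]; exact Or.inl (Or.inr (restrict_closures_sub e _ hc'))) _ _ hce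
      · exact hs c' (by rw [mem_state_closures]; exact Or.inr ⟨d, hd, hc'⟩) _ _ hce
  | @beta_w x t e c S hx =>
    intro c' hc' t' e' hce
    have hdom := hs (Clo.mk (.lam x t) e) (by rw [mem_state_closures]; left; left; rfl) _ _ rfl
    rw [mem_state_closures] at hc'
    rcases hc' with (rfl | hc') | ⟨d, hd, hc'⟩
    · cases hce
      rw [hdom]
      simp [fv, Finset.sdiff_singleton_eq_erase, Finset.erase_eq_of_notMem hx]
    · exact hs c' (by rw [mem_state_closures]; exact Or.inl (Or.inr hc')) _ _ hce
    · exact hs c' (by rw [mem_state_closures]; exact Or.inr ⟨d, List.mem_cons_of_mem _ hd, hc'⟩) _ _ hce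
  | @beta_nw x t e c S hx =>
    intro c' hc' t' e' hce
    have hdom := hs (Clo.mk (.lam x t) e) (by rw [mem_state_closures]; left; left; rfl) _ _ rfl
    rw [mem_state_closures] at hc'
    rcases hc' with (rfl | hc') | ⟨d, hd, hc'⟩
    · cases hce
      simp only [Env.dom, hdom, fv]
      rw [Finset.sdiff_singleton_eq_erase, Finset.insert_erase hx]
    · simp only [Env.closures, List.mem_append] at hc'
      rcases hc' with hc' | hc'
      · exact hs c' (by rw [mem_state_closures]; exact Or.inr ⟨c, List.mem_cons_self, hc'⟩) _ _ hce
      · exact hs c' (by rw [mem_state_closures]; exact Or.inl (Or.inr hc')) _ _ hce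
    · exact hs c' (by rw [mem_state_closures]; exact Or.inr ⟨d, List.mem_cons_of_mem _ hd, hc'⟩) _ _ hce
  | @sub x e e' u S hl =>
    intro c' hc' t' e'' hce
    rw [mem_state_closures] at hc'
    rcases hc' with (rfl | hc') | ⟨d, hd, hc'⟩
    · exact hs _ (by rw [mem_state_closures]; exact Or.inl (Or.inr (lookup_closures_sub hl (by simp [Clo.closures])))) _ _ hce
    · exact hs c' (by
        rw [mem_state_closures]
        refine Or.inl (Or.inr (lookup_closures_sub hl ?_))
        simp [Clo.closures, hc']) _ _ hce
    · exact hs c' (by rw [mem_state_closures]; exact Or.inr ⟨d, hd, hc'⟩) _ _ hce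

/-- environment domain invariant of the Space KAM. -/
theorem env_domain_invariant {s : State} (h : Reachable s) :
    ∀ c ∈ s.closures, ∀ t e, c = Clo.mk t e → e.dom = fv t := by
  obtain ⟨t₀, ht₀, hrun⟩ := h
  have : StInv s := by
    induction hrun with
    | refl =>
      intro c hc t e hce
      rw [mem_state_closures] at hc
      rcases hc with (rfl | hc) | ⟨d, hd, _⟩
      · cases hce; simpa [Env.dom] using ht₀.symm
      · simp [Env.closures] at hc
      · simp at hd
    | tail _ hstep ih => exact inv_step ih hstep
  exact this
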